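/- arXiv:1807.09598 — 4 statements merged into one kernel-verified Lean document; each statement's English description precedes it below -/
import Mathlib

section
/- If θ > π/6, then the Steiner (Fermat) configuration with a triple junction strictly beats the cone V_θ: there exists a point C = (0, y) with y > 0 such that |AC| + |CB| + y < 2, where A = (−cosθ, sinθ) and B = (cosθ, sinθ). Hence V_θ is not length-minimizing when θ > π/6. -/
/-! The competitor through the Steiner point, where the three segments meet at angles of `2π/3`,
sits at height `y = sin θ - cos θ / √3`, and then `|AC| = |CB| = 2 cos θ / √3`. Its length is
`√3 cos θ + sin θ = 2 cos (θ - π/6)`, which is `< 2` because `0 < θ - π/6 < π`; and `y > 0` because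
`√3 y = 2 sin (θ - π/6)`. -/

open Real Set

namespace Real

theorem sqrt_three_mul_cos_add_sin (x : ℝ) : √3 * cos x + sin x = 2 * cos (x - π / 6) := by
  rw [cos_sub, cos_pi_div_six, sin_pi_div_six]
  ring

theorem sqrt_three_mul_sin_sub_cos (x : ℝ) : √3 * sin x - cos x = 2 * sin (x - π / 6) := by
  rw [sin_sub, cos_pi_div_six, sin_pi_div_six]
  ring

theorem sqrt_sq_add_sq_div_sqrt_three {c : ℝ} (hc : 0 ≤ c) :
    √(c ^ 2 + (c / √3) ^ 2) = 2 * c / √3 := by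
  have h3 : √3 ^ 2 = 3 := sq_sqrt (by norm_num)
  rw [sqrt_eq_iff_mul_self_eq (by positivity) (by positivity)]
  field_simp
  linear_combination c ^ 2 * h3

end Real

theorem stmt_3 (θ : ℝ) (hθ1 : π/6 < θ) (hθ2 : θ ≤ π/2) :
    ∃ y : ℝ, 0 < y ∧
      2 * Real.sqrt ((Real.cos θ)^2 + (Real.sin θ - y)^2) + y < 2 := by
  refine ⟨sin θ - cos θ / √3, ?_, ?_⟩
  · have hscaled : √3 * (sin θ - cos θ / √3) = 2 * sin (θ - π / 6) := by
      rw [← sqrt_three_mul_sin_sub_cos]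
      field_simp
    have hsin_pos : 0 < sin (θ - π / 6) := sin_pos_of_pos_of_lt_pi (by linarith) (by linarith)
    exact pos_of_mul_pos_right (hscaled ▸ by positivity) (sqrt_nonneg 3)
  · have h3 : √3 ^ 2 = 3 := sq_sqrt (by norm_num)
    have hcos : 0 ≤ cos θ := cos_nonneg_of_mem_Icc ⟨by linarith [pi_pos], hθ2⟩
    have hlength : 2 * √(cos θ ^ 2 + (sin θ - (sin θ - cos θ / √3)) ^ 2) + (sin θ - cos θ / √3)
        = √3 * cos θ + sin θ := by
      rw [sub_sub_cancel, sqrt_sq_add_sq_div_sqrt_three hcos]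
      field_simp
      linear_combination -cos θ * h3
    have hcos_lt : cos (θ - π / 6) < cos 0 :=
      cos_lt_cos_of_nonneg_of_le_pi le_rfl (by linarith) (by linarith)
    rw [hlength, sqrt_three_mul_cos_add_sin]
    linarith [cos_zero]
end

section
/- If 0 ≤ θ < θ_α := arccos α, then the cone V_θ is not minimal for the weighted functional: there exists x₀ ∈ (0, cosθ) such that |A C'| + |C'' B| + α·|C' C''| < 2, where A = (−cosθ, sinθ), B = (cosθ, sinθ), C' = (−x₀, 0), C'' = (x₀, 0), and |C'C''| = 2x₀. -/
/-!
Pushing the vertex down to `C' = (-x, 0)`, `C'' = (x, 0)` replaces the two unit segments by two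
segments of length `|AC'|` with `|AC'|² = 1 - 2x cos θ + x²`, plus the boundary piece of weight
`2αx`. The competitor is cheaper iff `|AC'| < 1 - αx`, i.e. iff `x (1 - α²) < 2 (cos θ - α)`,
which holds for small `x > 0` exactly when `α < cos θ`, that is when `θ < arccos α`.
-/

open Real Set

theorem lt_cos_of_lt_arccos {α θ : ℝ} (hθ0 : 0 ≤ θ) (hθ : θ < arccos α) : α < cos θ := by
  have hα1 : α ≤ 1 := by
    by_contra! h
    rw [arccos_eq_zero.mpr h.le] at hθ
    linarith
  calc α ≤ cos (arccos α) := by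
        rcases le_or_gt (-1) α with h | h
        · rw [cos_arccos h hα1]
        · rw [arccos_of_le_neg_one h.le, cos_pi]
          exact h.le
    _ < cos θ := cos_lt_cos_of_nonneg_of_le_pi hθ0 (arccos_le_pi α) hθ

theorem cos_sub_sq_add_sin_sq (θ x : ℝ) :
    (cos θ - x) ^ 2 + sin θ ^ 2 = 1 - 2 * x * cos θ + x ^ 2 := by
  nlinarith [sin_sq_add_cos_sq θ]

theorem sqrt_cos_sub_sq_add_sin_sq_lt {α θ x : ℝ} (hαx : α * x < 1)
    (h : x * (1 - α ^ 2) < 2 * (cos θ - α)) (hx : 0 < x) :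
    √((cos θ - x) ^ 2 + sin θ ^ 2) < 1 - α * x := by
  rw [cos_sub_sq_add_sin_sq, sqrt_lt' (by linarith)]
  nlinarith

theorem stmt_4 (α θ : ℝ) (hα : α ∈ Ioc (0:ℝ) 1) (hθ0 : 0 ≤ θ)
    (hθ : θ < Real.arccos α) :
    ∃ x₀ ∈ Ioo 0 (Real.cos θ),
      2 * Real.sqrt ((Real.cos θ - x₀)^2 + (Real.sin θ)^2) + α * (2 * x₀) < 2 := by
  obtain ⟨hα0, hα1⟩ := hα
  have hαc : α < cos θ := lt_cos_of_lt_arccos hθ0 hθ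
  have hc1 : cos θ ≤ 1 := cos_le_one θ
  set x₀ := (cos θ - α) / 2 with hx₀_def
  have hx₀ : 0 < x₀ := by linarith
  have hαx : α * x₀ < 1 := by nlinarith
  have hgain : x₀ * (1 - α ^ 2) < 2 * (cos θ - α) := by nlinarith [sq_nonneg α]
  refine ⟨x₀, ⟨hx₀, by linarith⟩, ?_⟩
  linarith [sqrt_cos_sub_sq_add_sin_sq_lt hαx hgain hx₀]
end

section
/- For all x > 0 and c > 0, √((3/2)x² + √2·c·x + c²) ≤ √(3/2)·x + c/√3 + √(2/3)·c²/x. -/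
/-! With `y = √(3/2)·x` and `t = 1/√3` the inequality reads `√(y² + 2tyc + c²) ≤ y + tc + c²/y`.
The right side squared exceeds the radicand by `c²((c/y + t)² + 1) ≥ 0`, and it is nonnegative
because `y² + tyc + c²` is a positive semidefinite quadratic form when `t² ≤ 4`. -/

open Real

theorem sqrt_sq_add_two_mul_mul_add_sq_le {y t : ℝ} (z : ℝ) (hy : 0 < y) (ht : t ^ 2 ≤ 4) :
    √(y ^ 2 + 2 * t * y * z + z ^ 2) ≤ y + t * z + z ^ 2 / y := by
  have hform : 0 ≤ y ^ 2 + t * y * z + z ^ 2 := by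
    nlinarith [sq_nonneg (y + t * z / 2), mul_nonneg (sub_nonneg.2 ht) (sq_nonneg z)]
  have hrhs : y + t * z + z ^ 2 / y = (y ^ 2 + t * y * z + z ^ 2) / y := by
    field_simp
  have hexcess : (y + t * z + z ^ 2 / y) ^ 2 - (y ^ 2 + 2 * t * y * z + z ^ 2)
      = z ^ 2 * ((z / y + t) ^ 2 + 1) := by
    field_simp
    ring
  refine Real.sqrt_le_iff.2 ⟨hrhs ▸ div_nonneg hform hy.le, ?_⟩
  linarith [mul_nonneg (sq_nonneg z) (add_nonneg (sq_nonneg (z / y + t)) zero_le_one)]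

theorem stmt_9_general (x c : ℝ) (hx : 0 < x) :
    Real.sqrt ((3/2)*x^2 + Real.sqrt 2 * c * x + c^2)
      ≤ Real.sqrt (3/2) * x + c / Real.sqrt 3 + Real.sqrt (2/3) * c^2 / x := by
  have hsq : √(3 / 2) ^ 2 = 3 / 2 := Real.sq_sqrt (by norm_num)
  have hcross : 2 * (√3)⁻¹ * √(3 / 2) = √2 := by
    rw [Real.sqrt_div' _ (by norm_num : (0 : ℝ) ≤ 2)]
    field_simp
    exact (Real.sq_sqrt zero_le_two).symm
  have hrecip : √(2 / 3) = (√(3 / 2))⁻¹ := by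
    rw [← Real.sqrt_inv, inv_div]
  have key := sqrt_sq_add_two_mul_mul_add_sq_le (t := (√3)⁻¹) c (by positivity : 0 < √(3 / 2) * x)
    (by rw [inv_pow, Real.sq_sqrt (by norm_num)]; norm_num)
  convert key using 1
  · rw [mul_pow, hsq, ← hcross]
    ring_nf
  · rw [hrecip]
    field_simp

theorem stmt_9 (x c : ℝ) (hx : 0 < x) (hc : 0 < c) :
    Real.sqrt ((3/2)*x^2 + Real.sqrt 2 * c * x + c^2)
      ≤ Real.sqrt (3/2) * x + c / Real.sqrt 3 + Real.sqrt (2/3) * c^2 / x :=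
  stmt_9_general x c hx
end

section
/- For c > 0 and the corresponding x₀ ∈ (0, √2/3) with c = −x₀/(√2 log(3x₀/√2)), define D(x₀) = 3x₀²·(−√2 − √2/log(3x₀/√2) + α√3). Then D(x₀) < 0 whenever α < √(2/3)·(1 + 1/log(3x₀/√2)); moreover (1 + 1/log(3x₀/√2)) → 1 from below as x₀ → 0⁺, so for every α < √(2/3) there exists x₀ ∈ (0, √2/3) with D(x₀) < 0. -/
/-! Write `L = log (3 x₀ / √2)`. Since `√2 = √3 · √(2/3)`, the bound factors as
`D(x₀) = 3 x₀² · √3 · (α - √(2/3) (1 + 1/L))`, which is negative exactly when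
`α < √(2/3) (1 + 1/L)`. As `x₀ → 0⁺` we have `L → -∞`, so `1 + 1/L` tends to `1` from below, and
for `α < √(2/3)` the condition holds for all small enough `x₀`. -/

open Real Set Filter Topology

lemma sqrt_three_mul_sqrt_two_div_three : √3 * √(2 / 3) = √2 := by
  rw [← sqrt_mul (by norm_num)]
  norm_num

lemma neg_sqrt_two_sub_add_mul_sqrt_three (α L : ℝ) :
    -√2 - √2 / L + α * √3 = √3 * (α - √(2 / 3) * (1 + 1 / L)) := by
  rw [← sqrt_three_mul_sqrt_two_div_three]
  ring

lemma three_mul_sq_mul_neg_of_lt {α L x : ℝ} (hx : x ≠ 0)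
    (hα : α < √(2 / 3) * (1 + 1 / L)) :
    3 * x ^ 2 * (-√2 - √2 / L + α * √3) < 0 := by
  rw [neg_sqrt_two_sub_add_mul_sqrt_three]
  exact mul_neg_of_pos_of_neg (by positivity)
    (mul_neg_of_pos_of_neg (by positivity) (sub_neg.mpr hα))

lemma tendsto_mul_div_nhdsGT_zero {a b : ℝ} (ha : 0 < a) (hb : 0 < b) :
    Tendsto (fun x => a * x / b) (𝓝[>] 0) (𝓝[>] 0) := by
  refine tendsto_nhdsWithin_of_tendsto_nhds_of_eventually_within _ ?_ ?_
  · have hcont : Continuous fun x : ℝ => a * x / b := by fun_prop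
    simpa using (hcont.tendsto 0).mono_left nhdsWithin_le_nhds
  · filter_upwards [self_mem_nhdsWithin] with x (hx : 0 < x)
    exact div_pos (mul_pos ha hx) hb

section TendstoAtBot

variable {ι : Type*} {l : Filter ι} {g : ι → ℝ}

lemma tendsto_one_add_one_div_of_tendsto_atBot (hg : Tendsto g l atBot) :
    Tendsto (fun i => 1 + 1 / g i) l (𝓝 1) := by
  simpa using (tendsto_inv_atBot_zero.comp hg).const_add 1

lemma eventually_one_add_one_div_lt_one (hg : Tendsto g l atBot) :
    ∀ᶠ i in l, 1 + 1 / g i < 1 := by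
  filter_upwards [hg.eventually_lt_atBot 0] with i hi
  linarith [one_div_neg.mpr hi]

end TendstoAtBot

theorem stmt_11 (α : ℝ) :
    (∀ x₀ ∈ Ioo 0 (Real.sqrt 2 / 3),
      α < Real.sqrt (2/3) * (1 + 1 / Real.log (3 * x₀ / Real.sqrt 2)) →
      3 * x₀^2 * (-Real.sqrt 2 - Real.sqrt 2 / Real.log (3 * x₀ / Real.sqrt 2)
        + α * Real.sqrt 3) < 0) ∧
    Tendsto (fun x₀ : ℝ => 1 + 1 / Real.log (3 * x₀ / Real.sqrt 2))
      (nhdsWithin 0 (Ioi 0)) (nhds 1) ∧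
    (∀ᶠ x₀ in nhdsWithin (0:ℝ) (Ioi 0),
      1 + 1 / Real.log (3 * x₀ / Real.sqrt 2) < 1) ∧
    (α < Real.sqrt (2/3) →
      ∃ x₀ ∈ Ioo 0 (Real.sqrt 2 / 3),
        3 * x₀^2 * (-Real.sqrt 2 - Real.sqrt 2 / Real.log (3 * x₀ / Real.sqrt 2)
          + α * Real.sqrt 3) < 0) := by
  have hlog : Tendsto (fun x₀ => log (3 * x₀ / √2)) (𝓝[>] 0) atBot :=
    tendsto_log_nhdsGT_zero.comp (tendsto_mul_div_nhdsGT_zero (by norm_num) (by positivity))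
  have hlim := tendsto_one_add_one_div_of_tendsto_atBot hlog
  refine ⟨fun x₀ hx hα => three_mul_sq_mul_neg_of_lt hx.1.ne' hα, hlim,
    eventually_one_add_one_div_lt_one hlog, fun hα => ?_⟩
  have hbound : ∀ᶠ x₀ in 𝓝[>] 0, α < √(2 / 3) * (1 + 1 / log (3 * x₀ / √2)) :=
    (by simpa using hlim.const_mul √(2 / 3) : Tendsto _ _ (𝓝 √(2 / 3))).eventually_const_lt hα
  have hsmall : ∀ᶠ x₀ in 𝓝[>] 0, x₀ ∈ Ioo 0 (√2 / 3) := Ioo_mem_nhdsGT (by positivity)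
  obtain ⟨x₀, hx, hα₀⟩ := (hsmall.and hbound).exists
  exact ⟨x₀, hx, three_mul_sq_mul_neg_of_lt hx.1.ne' hα₀⟩
end
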